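/- arXiv:1504.04131 — 2 statements merged into one kernel-verified Lean document; each statement's English description precedes it below -/
import Mathlib

section
/- Let b ≥ 2 be an integer and k a positive integer with b-adic expansion as above. Let x ∈ [0,1) and write x = c·b^{−a_v} + x' where 0 ≤ c < b^{a_v} is an integer and x' ∈ [0, b^{−a_v}) is real. Then W_k(x) = ((1 − ω_b^{−cκ_v})/(1 − ω_b^{−κ_v}))·W_k(b^{−a_v}) + ω_b^{−cκ_v}·W_k(x'). In particular, W_k restricted to [0,1) is periodic with period b^{−a_v+1}. -/
open MeasureTheory Complex
open scoped ENNReal NNReal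

noncomputable section

namespace WalshPaper

/-- `ω_b = exp(2π√-1/b)`. -/
def omega (b : ℕ) : ℂ := Complex.exp (2 * Real.pi * Complex.I / b)

/-- `conj ω_b`. -/
def omegaBar (b : ℕ) : ℂ := (starRingEnd ℂ) (omega b)

/-- The `j`-th `b`-adic digit `ξ_j` of `x ∈ [0,1)` (the coefficient of `b^{-j}`),
taking the expansion with infinitely many digits different from `b-1`. -/
def xdigit (b j : ℕ) (x : ℝ) : ℕ := (⌊x * (b : ℝ) ^ j⌋ % (b : ℤ)).toNat

/-- The `k`-th `b`-adic Walsh function: `wal_k(x) = ω_b^(κ_1 ξ_{a_1} + ⋯ + κ_v ξ_{a_v})`,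
written as a sum over all digit positions of `k` (digits of `k` beyond position `k` vanish). -/
def wal (b k : ℕ) (x : ℝ) : ℂ :=
  omega b ^ ∑ j ∈ Finset.range k, (k / b ^ j % b) * xdigit b (j + 1) x

/-- The list of terms `κ_i b^{a_i - 1}` of the `b`-adic expansion of `k`, lowest first,
i.e. `[κ_v b^{a_v-1}, …, κ_1 b^{a_1-1}]`. -/
def terms (b k : ℕ) : List ℕ :=
  ((Nat.digits b k).zipIdx.map Prod.swap |>.filter fun p => p.2 ≠ 0).map fun p => p.2 * b ^ p.1

/-- `v(k)`, the number of nonzero `b`-adic digits of `k`. -/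
def nu (b k : ℕ) : ℕ := (terms b k).length

/-- The list `[a_1, …, a_v]` (decreasing). -/
def alist (b k : ℕ) : List ℕ :=
  (((Nat.digits b k).zipIdx.map Prod.swap |>.filter fun p => p.2 ≠ 0).map fun p => p.1 + 1).reverse

/-- The list `[κ_v, κ_{v-1}, …, κ_1]` (corresponding digits, lowest first). -/
def kappas (b k : ℕ) : List ℕ :=
  ((Nat.digits b k).zipIdx.map Prod.swap |>.filter fun p => p.2 ≠ 0).map fun p => p.2

/-- `μ(k) = a_1 + ⋯ + a_v`. -/
def mu (b k : ℕ) : ℕ := (alist b k).sum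

/-- `μ_α(k) = a_1 + ⋯ + a_{min(α,v)}`. -/
def muAlpha (b α k : ℕ) : ℕ := ((alist b k).take α).sum

/-- `a_v`, the smallest exponent (junk value `0` for `k = 0`). -/
def aLow (b k : ℕ) : ℕ := ((alist b k).getLast?).getD 0

/-- `κ_v`, the lowest nonzero digit of `k`. -/
def kapLow (b k : ℕ) : ℕ := k / b ^ (aLow b k - 1) % b

/-- `μ̄_α(k)`: equals `a_1 + ⋯ + a_v + (α - v) a_v` if `v ≤ α`, and `a_1 + ⋯ + a_α` else. -/
def muBar (b α k : ℕ) : ℕ :=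
  if nu b k ≤ α then mu b k + (α - nu b k) * aLow b k else muAlpha b α k

/-- `k_{≤ n} = Σ_{i=1}^{min(n,v)} κ_i b^{a_i - 1}` (the `min(n,v)` highest terms). -/
def kHigh (b k n : ℕ) : ℕ := ((terms b k).reverse.take n).sum

/-- `k_{> n} = Σ_{i=n+1}^{v} κ_i b^{a_i - 1}` (the remaining lower terms). -/
def kLow (b k n : ℕ) : ℕ := ((terms b k).reverse.drop n).sum

/-- Auxiliary function defining `W` along the list of terms of `k`, lowest term first. -/
def WAux (b : ℕ) : List ℕ → ℝ → ℂ
  | [], _ => 1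
  | t :: rest, x => ∫ y in (0:ℝ)..x, (starRingEnd ℂ) (wal b t y) * WAux b rest y

/-- `W_k : [0,1] → ℂ`, defined by `W_0 = 1` and `W_k(x) = ∫_0^x conj(wal_{κ_v b^{a_v-1}}(y)) W_{k'}(y) dy`
with `k' = k - κ_v b^{a_v-1}`. -/
def W (b k : ℕ) (x : ℝ) : ℂ := WAux b (terms b k) x

/-- `I(k) = ∫_0^1 W_k(x) dx`. -/
def I (b k : ℕ) : ℂ := ∫ x in (0:ℝ)..1, W b k x

/-- The iterated functions `W_k^{(j)}`: `W_k^{(0)} = W_k`,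
`W_k^{(j+1)}(x) = ∫_0^x (W_k^{(j)}(y) - I^{(j)}(k)) dy` where `I^{(j)}(k) = ∫_0^1 W_k^{(j)}`. -/
def Wj (b k : ℕ) : ℕ → ℝ → ℂ
  | 0 => W b k
  | j + 1 => fun x => ∫ y in (0:ℝ)..x, (Wj b k j y - ∫ t in (0:ℝ)..1, Wj b k j t)

/-- `I^{(j)}(k) = ∫_0^1 W_k^{(j)}(x) dx`. -/
def Ij (b k j : ℕ) : ℂ := ∫ x in (0:ℝ)..1, Wj b k j x

/-- The `k`-th Walsh coefficient of `f : [0,1) → ℝ`. -/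
def walshCoeff (b : ℕ) (f : ℝ → ℝ) (k : ℕ) : ℂ :=
  ∫ x in (0:ℝ)..1, (f x : ℂ) * (starRingEnd ℂ) (wal b k x)

/-- The half-open unit cube `[0,1)^s`. -/
def cube (s : ℕ) : Set (Fin s → ℝ) := Set.univ.pi fun _ => Set.Ico (0:ℝ) 1

/-- The closed unit cube `[0,1]^s`. -/
def cubeC (s : ℕ) : Set (Fin s → ℝ) := Set.univ.pi fun _ => Set.Icc (0:ℝ) 1

/-- The `k⃗`-th Walsh coefficient of `f : [0,1)^s → ℝ`. -/
def walshCoeffS (b s : ℕ) (f : (Fin s → ℝ) → ℝ) (k : Fin s → ℕ) : ℂ :=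
  ∫ x in cube s, (f x : ℂ) * (starRingEnd ℂ) (∏ j, wal b (k j) (x j))

/-- `m_b = 2 sin(π/b)`. -/
def mb (b : ℕ) : ℝ := 2 * Real.sin (Real.pi / b)

/-- `M_b = max_{c=1,…,b-1} |1 - ω_b^{-c}|`. -/
def Mb (b : ℕ) : ℝ := if Even b then 2 else 2 * Real.sin ((b + 1) * Real.pi / (2 * b))

/-- `C_v(b) = (b m_b/(b - M_b)) (1 - (M_b/b)^v)`. -/
def Cv (b v : ℕ) : ℝ := (b * mb b / (b - Mb b)) * (1 - (Mb b / b) ^ v)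

/-- The partial derivative of `g` in the `j`-th coordinate. -/
def pderiv {s : ℕ} (j : Fin s) (g : (Fin s → ℝ) → ℝ) (x : Fin s → ℝ) : ℝ :=
  deriv (fun t => g (Function.update x j t)) (x j)

/-- The mixed partial derivative `f^{(m_1,…,m_s)} = (∂/∂x_1)^{m_1} ⋯ (∂/∂x_s)^{m_s} f`. -/
def mixedPartial {s : ℕ} (m : Fin s → ℕ) (f : (Fin s → ℝ) → ℝ) : (Fin s → ℝ) → ℝ :=
  (List.finRange s).foldr (fun j g => (fun h => pderiv j h)^[m j] g) f

/-- `f` has continuous mixed partial derivatives up to order `α_j` in each variable `x_j`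
on the unit cube. -/
def HasContMixedPartials {s : ℕ} (α : Fin s → ℕ) (f : (Fin s → ℝ) → ℝ) : Prop :=
  ∀ m : Fin s → ℕ, (∀ j, m j ≤ α j) →
    ContinuousOn (mixedPartial m f) (cubeC s) ∧
      ∀ j : Fin s, m j < α j → ∀ x ∈ cubeC s,
        DifferentiableAt ℝ (fun t => mixedPartial m f (Function.update x j t)) (x j)

/-- `b_r(x) = B_r(x)/r!`, the normalized Bernoulli polynomial. -/
def bpoly (r : ℕ) (x : ℝ) : ℝ := (Polynomial.aeval x) (Polynomial.bernoulli r) / r.factorial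

/-- `b̃_α(x-y)`. -/
def btilde (α : ℕ) (x y : ℝ) : ℝ :=
  if Even α then bpoly α |x - y| else (if x < y then -1 else 1) * bpoly α |x - y|


/-! ### Auxiliary lemmas for Lemma 2.2 -/

section Aux

variable {b : ℕ}

lemma omega_prim (hb : 2 ≤ b) : IsPrimitiveRoot (omega b) b :=
  Complex.isPrimitiveRoot_exp b (by omega)

lemma omega_pow_b (hb : 2 ≤ b) : omega b ^ b = 1 := (omega_prim hb).pow_eq_one

lemma norm_omega (hb : 2 ≤ b) : ‖omega b‖ = 1 := by
  have : (2 * Real.pi * Complex.I / b : ℂ) = ((2 * Real.pi / b : ℝ) : ℂ) * Complex.I := by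
    push_cast; ring
  rw [omega, this]
  exact Complex.norm_exp_ofReal_mul_I _

lemma omegaBar_eq_inv (hb : 2 ≤ b) : omegaBar b = (omega b)⁻¹ := by
  rw [omegaBar, ← Complex.inv_eq_conj]
  simpa using norm_omega hb

lemma omegaBar_pow_b (hb : 2 ≤ b) : omegaBar b ^ b = 1 := by
  rw [omegaBar_eq_inv hb, inv_pow, omega_pow_b hb, inv_one]

lemma omegaBar_pow_ne_one (hb : 2 ≤ b) {d : ℕ} (hd0 : 0 < d) (hdb : d < b) :
    omegaBar b ^ d ≠ 1 := by
  rw [omegaBar_eq_inv hb, inv_pow]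
  intro h
  exact (omega_prim hb).pow_ne_one_of_pos_of_lt hd0.ne' hdb (by
    have := congrArg (·⁻¹) h; simpa using this)

lemma norm_wal (hb : 2 ≤ b) (k : ℕ) (x : ℝ) : ‖wal b k x‖ = 1 := by
  rw [wal, norm_pow, norm_omega hb, one_pow]

lemma measurable_xdigit (b j : ℕ) : Measurable (xdigit b j) := by
  unfold xdigit
  exact (measurable_from_top (f := fun z : ℤ => (z % (b:ℤ)).toNat)).comp
    (Int.measurable_floor.comp (measurable_id.mul_const _))

lemma measurable_wal (b k : ℕ) : Measurable (wal b k) := by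
  unfold wal
  exact (measurable_from_top (f := fun n : ℕ => omega b ^ n)).comp
    (Finset.measurable_sum _ fun j _ => ((measurable_xdigit b (j+1)).const_mul _))

/-- shorthand for `b^{-(i+1)}` -/
def qq (b i : ℕ) : ℝ := (b:ℝ) ^ (-((i:ℤ)+1))

lemma qq_pos (hb : 2 ≤ b) (i : ℕ) : 0 < qq b i := by
  have h : (0:ℝ) < b := by exact_mod_cast (by omega : 0 < b)
  exact zpow_pos h _

lemma qB (hb : 2 ≤ b) (i : ℕ) : qq b i * (b:ℝ) ^ (i+1) = 1 := by
  have hb0 : (b:ℝ) ≠ 0 := by positivity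
  rw [qq, ← zpow_natCast (b:ℝ) (i+1), ← zpow_add₀ hb0]
  ring_nf
  norm_num

lemma xdigit_eval (hb : 2 ≤ b) (i c : ℕ) (y : ℝ)
    (h1 : (c:ℝ) * qq b i ≤ y)
    (h2 : y < ((c:ℝ)+1) * qq b i) :
    xdigit b (i+1) y = c % b := by
  have hB : (0:ℝ) < (b:ℝ) ^ (i+1) := by positivity
  have key : qq b i * (b:ℝ) ^ (i+1) = 1 := qB hb i
  have hfl : ⌊y * (b:ℝ) ^ (i+1)⌋ = (c : ℤ) := by
    rw [Int.floor_eq_iff]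
    constructor
    · calc ((c:ℕ):ℝ) = (c:ℝ) * qq b i * (b:ℝ)^(i+1) := by rw [mul_assoc, key, mul_one]
        _ ≤ y * (b:ℝ)^(i+1) := by gcongr
    · calc y * (b:ℝ)^(i+1) < ((c:ℝ)+1) * qq b i * (b:ℝ)^(i+1) := by gcongr
        _ = (c:ℕ) + 1 := by rw [mul_assoc, key, mul_one]
  rw [xdigit, hfl]
  omega

lemma xdigit_periodic (hb : 2 ≤ b) (i : ℕ) :
    Function.Periodic (xdigit b (i+1)) ((b:ℝ) * qq b i) := by
  intro x
  have key : (b:ℝ) * qq b i * (b:ℝ) ^ (i+1) = (b:ℕ) := by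
    rw [mul_assoc, qB hb, mul_one]
  unfold xdigit
  have : (x + (b:ℝ) * qq b i) * (b:ℝ) ^ (i+1) = x * (b:ℝ)^(i+1) + (b:ℕ) := by
    rw [add_mul, key]
  rw [this, Int.floor_add_natCast]
  congr 1
  simp [Int.add_mul_emod_self_left]

lemma pow_mod_eq {z : ℂ} (hz : z ^ b = 1) (c : ℕ) : z ^ (c % b) = z ^ c := by
  conv_rhs => rw [← Nat.div_add_mod c b]
  rw [pow_add, pow_mul, hz, one_pow, one_mul]

lemma wal_single (hb : 2 ≤ b) {d : ℕ} (hd0 : 0 < d) (hdb : d < b) (i : ℕ) (x : ℝ) :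
    wal b (d * b ^ i) x = omega b ^ (d * xdigit b (i+1) x) := by
  rw [wal]
  congr 1
  rw [Finset.sum_eq_single i]
  · congr 1
    rw [Nat.mul_div_cancel _ (pow_pos (by omega : 0 < b) i)]
    exact Nat.mod_eq_of_lt hdb
  · intro j _ hji
    rcases lt_or_gt_of_ne hji with h | h
    · have : d * b ^ i = d * b ^ (i - j) * b ^ j := by
        rw [mul_assoc, ← pow_add]; congr 2; omega
      rw [this, Nat.mul_div_cancel _ (pow_pos (by omega : 0 < b) j)]
      have : b ∣ d * b ^ (i - j) := dvd_mul_of_dvd_right (dvd_pow_self b (by omega)) d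
      simp [Nat.eq_zero_of_dvd_of_lt, Nat.mod_eq_zero_of_dvd this]
    · have hlt : d * b ^ i < b ^ j := by
        calc d * b ^ i < b * b ^ i := by
              exact (Nat.mul_lt_mul_right (pow_pos (by omega : 0 < b) i)).2 hdb
          _ = b ^ (i+1) := by ring
          _ ≤ b ^ j := Nat.pow_le_pow_right (by omega) (by omega)
      rw [Nat.div_eq_of_lt hlt]
      simp
  · intro hi
    exfalso
    have : i < d * b ^ i :=
      lt_of_lt_of_le (Nat.lt_pow_self (n := i) (by omega : 1 < b)) (Nat.le_mul_of_pos_left _ hd0)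
    exact hi (Finset.mem_range.2 this)

lemma intervalIntegrable_mul_wal (hb : 2 ≤ b) (t : ℕ) {F : ℝ → ℂ} (hF : Continuous F)
    (u v : ℝ) :
    IntervalIntegrable (fun y => (starRingEnd ℂ) (wal b t y) * F y) volume u v := by
  rw [intervalIntegrable_iff]
  have hnorm := hF.norm.intervalIntegrable (μ := volume) u v
  rw [intervalIntegrable_iff] at hnorm
  refine Integrable.mono' hnorm ?_ ?_
  · exact ((Complex.continuous_conj.measurable.comp (measurable_wal b t)).mul
      hF.measurable).aestronglyMeasurable
  · filter_upwards with y
    rw [norm_mul]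
    simp [norm_wal hb]

lemma continuous_WAux (hb : 2 ≤ b) : ∀ L, Continuous (WAux b L)
  | [] => continuous_const
  | t :: rest =>
      intervalIntegral.continuous_primitive
        (fun u v => intervalIntegrable_mul_wal hb t (continuous_WAux hb rest) u v) 0

lemma conj_wal_single (hb : 2 ≤ b) {d : ℕ} (hd0 : 0 < d) (hdb : d < b) (i : ℕ) (x : ℝ) :
    (starRingEnd ℂ) (wal b (d * b ^ i) x) = omegaBar b ^ (d * xdigit b (i+1) x) := by
  rw [wal_single hb hd0 hdb, map_pow, omegaBar]

lemma zpow_b (hb : 2 ≤ b) {d : ℕ} : (omegaBar b ^ d) ^ b = 1 := by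
  rw [← pow_mul, mul_comm, pow_mul, omegaBar_pow_b hb, one_pow]

section QP
variable {d i : ℕ} {F : ℝ → ℂ}

lemma block_shift (hb : 2 ≤ b) (hd0 : 0 < d) (hdb : d < b)
    (hF : Continuous F) (hFp : Function.Periodic F (qq b i)) (c : ℕ) (x' : ℝ)
    (hx0 : 0 ≤ x') (hxq : x' ≤ qq b i) :
    (∫ y in ((c:ℝ) * qq b i)..((c:ℝ) * qq b i + x'),
        (starRingEnd ℂ) (wal b (d * b ^ i) y) * F y)
      = (omegaBar b ^ d) ^ c * ∫ y in (0:ℝ)..x', F y := by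
  have hshift : (∫ y in ((c:ℝ) * qq b i)..((c:ℝ) * qq b i + x'),
      (starRingEnd ℂ) (wal b (d * b ^ i) y) * F y)
      = ∫ y in (0:ℝ)..x',
          (starRingEnd ℂ) (wal b (d * b ^ i) (y + (c:ℝ) * qq b i)) * F (y + (c:ℝ) * qq b i) := by
    rw [intervalIntegral.integral_comp_add_right
      (fun y => (starRingEnd ℂ) (wal b (d * b ^ i) y) * F y)]
    congr 1 <;> ring
  rw [hshift, ← intervalIntegral.integral_const_mul]
  apply intervalIntegral.integral_congr_ae
  have hae : ∀ᵐ (y:ℝ), y ≠ qq b i := by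
    rw [MeasureTheory.ae_iff]
    simp only [not_not, Set.setOf_eq_eq_singleton]
    exact measure_singleton _
  filter_upwards [hae] with y hyne hymem
  rw [Set.uIoc_of_le hx0] at hymem
  obtain ⟨hy0, hyx⟩ := hymem
  have hylt : y < qq b i := lt_of_le_of_ne (le_trans hyx hxq) hyne
  have hxd : xdigit b (i+1) (y + (c:ℝ) * qq b i) = c % b := by
    apply xdigit_eval hb
    · show (c:ℝ) * qq b i ≤ _
      linarith
    · show _ < ((c:ℝ)+1) * qq b i
      have : ((c:ℝ)+1) * qq b i = (c:ℝ) * qq b i + qq b i := by ring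
      rw [this]
      linarith
  rw [conj_wal_single hb hd0 hdb, hxd, (hFp.nat_mul c) y, pow_mul,
    pow_mod_eq (zpow_b hb)]

lemma blocksum (hb : 2 ≤ b) (hd0 : 0 < d) (hdb : d < b)
    (hF : Continuous F) (hFp : Function.Periodic F (qq b i)) (c : ℕ) :
    (∫ y in (0:ℝ)..((c:ℝ) * qq b i),
        (starRingEnd ℂ) (wal b (d * b ^ i) y) * F y)
      = (∑ j ∈ Finset.range c, (omegaBar b ^ d) ^ j) * ∫ y in (0:ℝ)..(qq b i), F y := by
  induction c with
  | zero => simp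
  | succ n ih =>
    have split := intervalIntegral.integral_add_adjacent_intervals
      (a := (0:ℝ)) (b := (n:ℝ) * qq b i) (c := (n:ℝ) * qq b i + qq b i)
      (intervalIntegrable_mul_wal hb (d * b ^ i) hF _ _)
      (intervalIntegrable_mul_wal hb (d * b ^ i) hF _ _)
    have hcast : ((n+1:ℕ):ℝ) * qq b i = (n:ℝ) * qq b i + qq b i := by push_cast; ring
    rw [hcast, ← split, ih,
      block_shift hb hd0 hdb hF hFp n (qq b i) (qq_pos hb i).le le_rfl,
      Finset.sum_range_succ, add_mul]

lemma G_formula (hb : 2 ≤ b) (hd0 : 0 < d) (hdb : d < b)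
    (hF : Continuous F) (hFp : Function.Periodic F (qq b i)) (c : ℕ) (x' : ℝ)
    (hx0 : 0 ≤ x') (hxq : x' ≤ qq b i) :
    (∫ y in (0:ℝ)..((c:ℝ) * qq b i + x'),
        (starRingEnd ℂ) (wal b (d * b ^ i) y) * F y)
      = (∑ j ∈ Finset.range c, (omegaBar b ^ d) ^ j) *
          (∫ y in (0:ℝ)..(qq b i), (starRingEnd ℂ) (wal b (d * b ^ i) y) * F y)
        + (omegaBar b ^ d) ^ c *
          (∫ y in (0:ℝ)..x', (starRingEnd ℂ) (wal b (d * b ^ i) y) * F y) := by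
  have hq1 : (∫ y in (0:ℝ)..(qq b i), (starRingEnd ℂ) (wal b (d * b ^ i) y) * F y)
      = ∫ y in (0:ℝ)..(qq b i), F y := by
    have := blocksum hb hd0 hdb hF hFp 1
    simpa using this
  have hx1 : (∫ y in (0:ℝ)..x', (starRingEnd ℂ) (wal b (d * b ^ i) y) * F y)
      = ∫ y in (0:ℝ)..x', F y := by
    have := block_shift hb hd0 hdb hF hFp 0 x' hx0 hxq
    simpa using this
  rw [hq1, hx1,
    ← intervalIntegral.integral_add_adjacent_intervals
      (a := (0:ℝ)) (b := (c:ℝ) * qq b i) (c := (c:ℝ) * qq b i + x')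
      (intervalIntegrable_mul_wal hb (d * b ^ i) hF _ _)
      (intervalIntegrable_mul_wal hb (d * b ^ i) hF _ _),
    blocksum hb hd0 hdb hF hFp c, block_shift hb hd0 hdb hF hFp c x' hx0 hxq]

lemma G_periodic (hb : 2 ≤ b) (hd0 : 0 < d) (hdb : d < b)
    (hF : Continuous F) (hFp : Function.Periodic F (qq b i)) :
    Function.Periodic
      (fun x => ∫ y in (0:ℝ)..x, (starRingEnd ℂ) (wal b (d * b ^ i) y) * F y)
      ((b:ℝ) * qq b i) := by
  have hwalp : Function.Periodic (wal b (d * b ^ i)) ((b:ℝ) * qq b i) := by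
    intro x
    rw [wal_single hb hd0 hdb, wal_single hb hd0 hdb, (xdigit_periodic hb i) x]
  have hh : Function.Periodic
      (fun y => (starRingEnd ℂ) (wal b (d * b ^ i) y) * F y) ((b:ℝ) * qq b i) :=
    (hwalp.comp (starRingEnd ℂ)).mul (hFp.nat_mul b)
  intro x
  have split := intervalIntegral.integral_add_adjacent_intervals
    (a := (0:ℝ)) (b := x) (c := x + (b:ℝ) * qq b i)
    (intervalIntegrable_mul_wal hb (d * b ^ i) hF _ _)
    (intervalIntegrable_mul_wal hb (d * b ^ i) hF _ _)
  have hmid : (∫ y in x..(x + (b:ℝ) * qq b i),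
      (starRingEnd ℂ) (wal b (d * b ^ i) y) * F y) = 0 := by
    rw [hh.intervalIntegral_add_eq x 0, zero_add]
    have : ((b:ℕ):ℝ) * qq b i = (b:ℝ) * qq b i := by norm_num
    rw [← this, blocksum hb hd0 hdb hF hFp b]
    have hz : (∑ j ∈ Finset.range b, (omegaBar b ^ d) ^ j) = 0 := by
      rw [geom_sum_eq (omegaBar_pow_ne_one hb hd0 hdb) b, zpow_b hb]
      simp
    rw [hz, zero_mul]
  simp only
  rw [← split, hmid, add_zero]

end QP

inductive GoodList (b : ℕ) : ℕ → List ℕ → Prop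
  | nil (a : ℕ) : GoodList b a []
  | cons (a d e : ℕ) (rest : List ℕ) (hae : a ≤ e) (hd0 : 0 < d) (hdb : d < b)
      (h : GoodList b (e+1) rest) : GoodList b a (d * b ^ e :: rest)

lemma periodic_WAux (hb : 2 ≤ b) {a : ℕ} {L : List ℕ} (hG : GoodList b a L) :
    Function.Periodic (WAux b L) ((b:ℝ) ^ (-(a:ℤ))) := by
  have hbne : (b:ℝ) ≠ 0 := by
    have : (0:ℕ) < b := by omega
    exact_mod_cast Nat.pos_iff_ne_zero.mp this
  induction hG with
  | nil a => intro x; rfl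
  | cons a d e rest hae hd0 hdb hG ih =>
    have hq : (b:ℝ) ^ (-((e+1:ℕ):ℤ)) = qq b e := by
      rw [qq]; push_cast; try ring
    have hper : Function.Periodic (WAux b rest) (qq b e) := hq ▸ ih
    have key : Function.Periodic (WAux b (d * b ^ e :: rest)) ((b:ℝ) * qq b e) :=
      G_periodic hb hd0 hdb (continuous_WAux hb rest) hper
    have key2 := key.nat_mul (b ^ (e - a))
    have h1 : (b:ℝ) ^ (-(e:ℤ)) = (b:ℝ) * (b:ℝ) ^ (-((e:ℤ)+1)) := by
      rw [show (-(e:ℤ)) = 1 + (-((e:ℤ)+1)) by ring, zpow_add₀ hbne, zpow_one]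
    have hexp : ((b ^ (e - a) : ℕ) : ℝ) * ((b:ℝ) * qq b e) = (b:ℝ) ^ (-(a:ℤ)) := by
      rw [Nat.cast_pow, qq, ← h1, ← zpow_natCast (b:ℝ) (e - a), ← zpow_add₀ hbne]
      congr 1
      rw [Nat.cast_sub hae]
      ring
    rwa [hexp] at key2

lemma good_of_pairs (hb : 2 ≤ b) : ∀ (P : List (ℕ × ℕ)) (a : ℕ),
    P.Pairwise (fun p q => p.1 < q.1) → (∀ p ∈ P, a ≤ p.1 ∧ 0 < p.2 ∧ p.2 < b) →
    GoodList b a (P.map fun p => p.2 * b ^ p.1)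
  | [], a, _, _ => GoodList.nil a
  | p :: P', a, hpw, hmem => by
    obtain ⟨ha, h0, hlt⟩ := hmem p List.mem_cons_self
    rw [List.pairwise_cons] at hpw
    rw [List.map_cons]
    exact GoodList.cons a p.2 p.1 _ ha h0 hlt
      (good_of_pairs hb P' (p.1 + 1) hpw.2
        (fun q hq => ⟨hpw.1 q hq, ((hmem q (List.mem_cons_of_mem _ hq)).2)⟩))

lemma digits_getD (hb : 2 ≤ b) : ∀ (j k : ℕ), (Nat.digits b k).getD j 0 = k / b ^ j % b
  | 0, k => by
    rcases Nat.eq_zero_or_pos k with rfl | hk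
    · simp
    · rw [Nat.digits_def' (by omega : 1 < b) hk]; simp
  | j + 1, k => by
    rcases Nat.eq_zero_or_pos k with rfl | hk
    · simp
    · rw [Nat.digits_def' (by omega : 1 < b) hk]
      show (Nat.digits b (k / b)).getD j 0 = _
      rw [digits_getD hb j (k / b), Nat.div_div_eq_div_mul]
      congr 2
      rw [pow_succ']

lemma struct (hb : 2 ≤ b) {k : ℕ} (hk : 0 < k) :
    ∃ (i d : ℕ) (R : List ℕ),
      terms b k = d * b ^ i :: R ∧ aLow b k = i + 1 ∧ kapLow b k = d ∧
      0 < d ∧ d < b ∧ GoodList b (i + 1) R := by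
  set ds := Nat.digits b k with hds
  have hdig_ne : ds ≠ [] := Nat.digits_ne_nil_iff_ne_zero.mpr (by omega)
  set L0 := (ds.zipIdx.map Prod.swap).filter (fun p => p.2 ≠ 0) with hL0
  have hsw : ∀ n x, (n, x) ∈ ds.zipIdx.map Prod.swap ↔ ds[n]? = some x := by
    intro n x
    rw [List.mem_map]
    constructor
    · rintro ⟨⟨a, c⟩, h, he⟩
      simp only [Prod.swap_prod_mk, Prod.mk.injEq] at he
      obtain ⟨rfl, rfl⟩ := he
      exact List.mk_mem_zipIdx_iff_getElem?.mp h
    · intro h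
      exact ⟨(x, n), List.mk_mem_zipIdx_iff_getElem?.mpr h, rfl⟩
  have hpw : L0.Pairwise (fun p q : ℕ × ℕ => p.1 < q.1) := by
    apply List.Pairwise.filter
    have h1 : ((ds.zipIdx.map Prod.swap).map Prod.fst).Pairwise (· < ·) := by
      rw [List.map_map, show Prod.fst ∘ Prod.swap = (Prod.snd : ℕ × ℕ → ℕ) from rfl,
        List.zipIdx_map_snd, ← List.range_eq_range']; exact List.pairwise_lt_range
    exact List.pairwise_map.mp h1
  have hL0ne : L0 ≠ [] := by
    intro hnil
    have hlast : ds.getLast hdig_ne ≠ 0 := Nat.getLast_digit_ne_zero b (by omega)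
    have hmem : ds.getLast hdig_ne ∈ ds := List.getLast_mem hdig_ne
    obtain ⟨n, hn, hget⟩ := List.mem_iff_getElem.mp hmem
    have henum : (n, ds.getLast hdig_ne) ∈ ds.zipIdx.map Prod.swap := by
      rw [hsw]
      exact hget ▸ List.getElem?_eq_getElem hn
    have : (n, ds.getLast hdig_ne) ∈ L0 := by
      rw [hL0, List.mem_filter]
      exact ⟨henum, by simpa using hlast⟩
    rw [hnil] at this
    exact List.not_mem_nil this
  obtain ⟨⟨i, d⟩, tail, hL0eq⟩ := List.exists_cons_of_ne_nil hL0ne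
  have hmemL0 : ∀ p ∈ L0, p.2 ≠ 0 ∧ p.2 < b ∧ (ds[p.1]? = some p.2) := by
    intro p hp
    rw [hL0, List.mem_filter] at hp
    obtain ⟨hpe, hpne⟩ := hp
    refine ⟨by simpa using hpne, ?_, ?_⟩
    · have : p.2 ∈ ds := by
        have := (hsw p.1 p.2).mp hpe
        exact List.mem_of_getElem? this
      exact Nat.digits_lt_base (by omega) this
    · exact (hsw p.1 p.2).mp hpe
  have hhead := hmemL0 (i, d) (hL0eq ▸ (List.mem_cons_self (a := (i, d)) (l := tail)))
  have haLow : aLow b k = i + 1 := by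
    rw [aLow, alist, ← hds, ← hL0, hL0eq]
    rw [List.map_cons, List.getLast?_reverse]
    rfl
  have hkap : kapLow b k = d := by
    rw [kapLow, haLow]
    simp only [Nat.add_sub_cancel]
    rw [← digits_getD hb i k, ← hds]
    rw [List.getD_eq_getElem?_getD, hhead.2.2]
    rfl
  refine ⟨i, d, tail.map fun p => p.2 * b ^ p.1, ?_, haLow, hkap, Nat.pos_of_ne_zero hhead.1,
    hhead.2.1, ?_⟩
  · rw [terms, ← hds, ← hL0, hL0eq, List.map_cons]
  · rw [hL0eq, List.pairwise_cons] at hpw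
    exact good_of_pairs hb tail (i + 1) hpw.2 (fun q hq =>
      ⟨hpw.1 q hq, Nat.pos_of_ne_zero (hmemL0 q (hL0eq ▸ List.mem_cons_of_mem _ hq)).1,
       (hmemL0 q (hL0eq ▸ List.mem_cons_of_mem _ hq)).2.1⟩)

end Aux

/-- Lemma 2.2 (quasi-periodicity of `W_k`). -/
theorem W_quasi_periodic (b : ℕ) (hb : 2 ≤ b) (k : ℕ) (hk : 0 < k) :
    (∀ (c : ℕ) (x' : ℝ), c < b ^ aLow b k → 0 ≤ x' → x' < (b:ℝ) ^ (-(aLow b k : ℤ)) →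
      W b k ((c : ℝ) * (b:ℝ) ^ (-(aLow b k : ℤ)) + x') =
        (1 - omegaBar b ^ (c * kapLow b k)) / (1 - omegaBar b ^ kapLow b k) *
            W b k ((b:ℝ) ^ (-(aLow b k : ℤ))) +
          omegaBar b ^ (c * kapLow b k) * W b k x') ∧
    (∀ x : ℝ, x ∈ Set.Ico (0:ℝ) 1 →
      x + (b:ℝ) ^ (-(aLow b k : ℤ) + 1) ∈ Set.Ico (0:ℝ) 1 →
      W b k (x + (b:ℝ) ^ (-(aLow b k : ℤ) + 1)) = W b k x) := by
  obtain ⟨i, d, R, hterms, haLow, hkap, hd0, hdb, hGR⟩ := struct hb hk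
  have hqeq : (b:ℝ) ^ (-(aLow b k : ℤ)) = qq b i := by
    rw [haLow, qq]; push_cast; try ring
  have hFc : Continuous (WAux b R) := continuous_WAux hb R
  have hq' : (b:ℝ) ^ (-((i+1:ℕ):ℤ)) = qq b i := by
    rw [qq]; push_cast; try ring
  have hFp : Function.Periodic (WAux b R) (qq b i) := hq' ▸ periodic_WAux hb hGR
  constructor
  · intro c x' hc hx0 hxlt
    rw [hqeq] at hxlt
    simp only [hqeq, hkap, W, hterms, WAux]
    rw [G_formula hb hd0 hdb hFc hFp c x' hx0 hxlt.le]
    have hgeom : (∑ j ∈ Finset.range c, (omegaBar b ^ d) ^ j)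
        = (1 - omegaBar b ^ (c * d)) / (1 - omegaBar b ^ d) := by
      rw [geom_sum_eq (omegaBar_pow_ne_one hb hd0 hdb) c, mul_comm c d, pow_mul]
      rw [show (omegaBar b ^ d) ^ c - 1 = -(1 - (omegaBar b ^ d) ^ c) by ring,
          show omegaBar b ^ d - 1 = -(1 - omegaBar b ^ d) by ring, neg_div_neg_eq]
    rw [hgeom, mul_comm c d, pow_mul]
  · intro x _ _
    have hGood : GoodList b i (terms b k) :=
      hterms ▸ GoodList.cons i d i R le_rfl hd0 hdb hGR
    have hper := periodic_WAux hb hGood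
    have hexp : (b:ℝ) ^ (-(aLow b k : ℤ) + 1) = (b:ℝ) ^ (-(i:ℤ)) := by
      rw [haLow]; congr 1; push_cast; ring
    rw [W, W, hexp]
    exact hper x

end WalshPaper
end
end

section
/- Let b = 2. (i) If k is a positive integer and x_1, x_2 ∈ [0,1) are such that x_1 + x_2 is an integer multiple of 2^{−a_v+1}, then W_k(x_1) = W_k(x_2). (ii) If k is a positive integer and x_1, x_2 ∈ [0,1) are such that x_1 + x_2 is an integer multiple of 2^{−a_v} but not of 2^{−a_v+1}, then W_k(x_1) + W_k(x_2) = W_k(2^{−a_v}). (iii) For every k ∈ ℕ, the function W_k is real-valued and nonnegative on [0,1). -/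
open MeasureTheory Complex
open scoped ENNReal NNReal

noncomputable section

namespace WalshPaper

def rad (a : ℕ) (y : ℝ) : ℂ := if Even ⌊y * (2:ℝ) ^ a⌋ then 1 else -1

lemma omega_two : omega 2 = -1 := by
  unfold omega
  rw [show (2 * (Real.pi:ℂ) * Complex.I / ((2:ℕ):ℂ)) = Real.pi * Complex.I by push_cast; ring,
    Complex.exp_pi_mul_I]

lemma wal_pow (a : ℕ) (ha : 1 ≤ a) (y : ℝ) : wal 2 (2 ^ (a - 1)) y = rad a y := by
  have hsum : ∑ j ∈ Finset.range (2 ^ (a-1)), (2 ^ (a-1) / 2 ^ j % 2) * xdigit 2 (j + 1) y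
      = xdigit 2 a y := by
    rw [Finset.sum_eq_single (a-1)]
    · rw [Nat.div_self (by positivity : 0 < 2 ^ (a-1)), Nat.one_mod, one_mul,
        Nat.sub_add_cancel ha]
    · intro j hj hne
      have h0 : (2:ℕ) ^ (a-1) / 2 ^ j % 2 = 0 := by
        rcases lt_or_gt_of_ne hne with h | h
        · rw [Nat.pow_div (by omega) (by norm_num)]
          obtain ⟨m, hm⟩ := Nat.exists_eq_succ_of_ne_zero (show a - 1 - j ≠ 0 by omega)
          rw [hm, pow_succ, Nat.mul_mod_left]
        · rw [Nat.div_eq_of_lt (Nat.pow_lt_pow_right one_lt_two h), Nat.zero_mod]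
      rw [h0, zero_mul]
    · intro h; exact absurd (Finset.mem_range.mpr (Nat.lt_two_pow_self (n := a-1))) h
  unfold wal rad
  rw [hsum, omega_two]
  unfold xdigit
  have hcast : ((2:ℕ):ℝ) = (2:ℝ) := by norm_num
  rw [hcast]
  rcases Int.even_or_odd ⌊y * (2:ℝ) ^ a⌋ with he | ho
  · rw [if_pos he]
    have : ⌊y * (2:ℝ) ^ a⌋ % ((2:ℕ):ℤ) = 0 := by
      rw [Int.even_iff] at he; exact_mod_cast he
    rw [this]; simp
  · rw [if_neg (Int.not_even_iff_odd.mpr ho)]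
    have : ⌊y * (2:ℝ) ^ a⌋ % ((2:ℕ):ℤ) = 1 := by
      rw [Int.odd_iff] at ho; exact_mod_cast ho
    rw [this]; simp

lemma rad_conj (a : ℕ) (y : ℝ) : (starRingEnd ℂ) (rad a y) = rad a y := by
  unfold rad; split_ifs <;> simp

lemma rad_norm (a : ℕ) (y : ℝ) : ‖rad a y‖ ≤ 1 := by
  unfold rad; split_ifs <;> simp

lemma rad_measurable (a : ℕ) : Measurable (rad a) := by
  unfold rad
  have hm : Measurable fun y : ℝ => ⌊y * (2:ℝ) ^ a⌋ :=
    Int.measurable_floor.comp (measurable_id.mul_const _)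
  have hset : MeasurableSet {y : ℝ | Even ⌊y * (2:ℝ) ^ a⌋} := by
    have : {y : ℝ | Even ⌊y * (2:ℝ) ^ a⌋} = (fun y : ℝ => ⌊y * (2:ℝ) ^ a⌋) ⁻¹' {n : ℤ | Even n} := rfl
    rw [this]; exact hm trivial
  exact Measurable.ite hset measurable_const measurable_const

lemma rad_one (a : ℕ) {y : ℝ} (h0 : 0 ≤ y) (h1 : y < (2:ℝ) ^ (-(a:ℤ))) : rad a y = 1 := by
  have hpa : (0:ℝ) < (2:ℝ) ^ (a:ℕ) := by positivity
  have : ⌊y * (2:ℝ) ^ a⌋ = 0 := by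
    apply Int.floor_eq_zero_iff.mpr
    constructor
    · positivity
    · have := mul_lt_mul_of_pos_right h1 hpa
      rwa [show (2:ℝ) ^ (-(a:ℤ)) * (2:ℝ)^(a:ℕ) = 1 by
        rw [← zpow_natCast (2:ℝ) a, ← zpow_add₀ (two_ne_zero)]; simp] at this
  rw [rad, this, if_pos Even.zero]


lemma floor_reflect {t : ℝ} (h : ¬∃ n : ℤ, t = n) (m : ℤ) : ⌊(m:ℝ) - t⌋ = m - ⌊t⌋ - 1 := by
  have h1 : (⌊t⌋:ℝ) < t :=
    lt_of_le_of_ne (Int.floor_le t) (by intro he; exact h ⟨⌊t⌋, he.symm⟩)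
  have h2 : t < ⌊t⌋ + 1 := Int.lt_floor_add_one t
  rw [Int.floor_eq_iff]
  constructor <;> push_cast <;> linarith

/-- a.e. y, `y * 2^a` is not an integer. -/
lemma ae_notint (a : ℕ) : ∀ᵐ y : ℝ, ¬∃ n : ℤ, y * (2:ℝ)^(a:ℕ) = (n:ℝ) := by
  have hsub : {y : ℝ | ∃ n : ℤ, y * (2:ℝ)^(a:ℕ) = n} ⊆ Set.range (fun n : ℤ => (n:ℝ) / 2^(a:ℕ)) := by
    rintro y ⟨n, hn⟩
    refine ⟨n, ?_⟩
    field_simp [← hn]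
    linarith
  have h0 : volume {y : ℝ | ∃ n : ℤ, y * (2:ℝ)^(a:ℕ) = n} = 0 :=
    measure_mono_null hsub ((Set.countable_range _).measure_zero _)
  exact MeasureTheory.measure_eq_zero_iff_ae_notMem.mp h0

lemma zpow_cancel (a : ℕ) : (2:ℝ) ^ (-(a:ℤ)) * (2:ℝ) ^ (a:ℕ) = 1 := by
  rw [← zpow_natCast (2:ℝ) a, ← zpow_add₀ (two_ne_zero)]; simp

lemma zpow_cancel' (a : ℕ) : (2:ℝ) ^ (-(a:ℤ)+1) * (2:ℝ) ^ (a:ℕ) = 2 := by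
  rw [← zpow_natCast (2:ℝ) a, ← zpow_add₀ (two_ne_zero)]
  rw [show -(a:ℤ) + 1 + a = 1 by ring]; norm_num

lemma rad_reflect_even (a : ℕ) (m : ℤ) {y : ℝ} (hy : ¬∃ n : ℤ, y * (2:ℝ)^(a:ℕ) = (n:ℝ)) :
    rad a ((m:ℝ) * (2:ℝ)^(-(a:ℤ)+1) - y) = - rad a y := by
  have harg : ((m:ℝ) * (2:ℝ)^(-(a:ℤ)+1) - y) * (2:ℝ)^(a:ℕ)
      = ((2*m : ℤ) : ℝ) - y * (2:ℝ)^(a:ℕ) := by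
    push_cast
    rw [sub_mul, mul_assoc, zpow_cancel' a]; ring
  have hfl : ⌊((m:ℝ) * (2:ℝ)^(-(a:ℤ)+1) - y) * (2:ℝ)^(a:ℕ)⌋
      = 2*m - ⌊y * (2:ℝ)^(a:ℕ)⌋ - 1 := by
    rw [harg, floor_reflect (by simpa using hy)]
  unfold rad
  rw [hfl]
  rcases Int.even_or_odd ⌊y * (2:ℝ)^(a:ℕ)⌋ with he | ho
  · rw [if_pos he, if_neg (by rw [Int.even_iff] at he ⊢; omega)]
  · rw [if_neg (Int.not_even_iff_odd.mpr ho), if_pos (by rw [Int.odd_iff] at ho; rw [Int.even_iff]; omega)]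
    simp

lemma rad_reflect_odd (a : ℕ) (m : ℤ) {y : ℝ} (hy : ¬∃ n : ℤ, y * (2:ℝ)^(a:ℕ) = (n:ℝ)) :
    rad a ((2*(m:ℝ)+1) * (2:ℝ)^(-(a:ℤ)) - y) = rad a y := by
  have harg : ((2*(m:ℝ)+1) * (2:ℝ)^(-(a:ℤ)) - y) * (2:ℝ)^(a:ℕ)
      = ((2*m+1 : ℤ) : ℝ) - y * (2:ℝ)^(a:ℕ) := by
    push_cast
    rw [sub_mul, mul_assoc, zpow_cancel a]; ring
  have hfl : ⌊((2*(m:ℝ)+1) * (2:ℝ)^(-(a:ℤ)) - y) * (2:ℝ)^(a:ℕ)⌋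
      = 2*m+1 - ⌊y * (2:ℝ)^(a:ℕ)⌋ - 1 := by
    rw [harg, floor_reflect (by simpa using hy)]
  unfold rad
  rw [hfl]
  rcases Int.even_or_odd ⌊y * (2:ℝ)^(a:ℕ)⌋ with he | ho
  · rw [if_pos he, if_pos (by rw [Int.even_iff] at he ⊢; omega)]
  · rw [if_neg (Int.not_even_iff_odd.mpr ho), if_neg (by rw [Int.odd_iff] at ho; rw [Int.not_even_iff]; omega)]


def Fn (E : List ℕ) : ℝ → ℂ := WAux 2 (E.map fun a => 2 ^ (a - 1))

lemma Fn_nil (x : ℝ) : Fn [] x = 1 := rfl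

lemma conj_intervalIntegral (f : ℝ → ℂ) (a b : ℝ) :
    (starRingEnd ℂ) (∫ x in a..b, f x) = ∫ x in a..b, (starRingEnd ℂ) (f x) := by
  rw [intervalIntegral, intervalIntegral, map_sub, ← integral_conj, ← integral_conj]

lemma Fn_cons (a : ℕ) (ha : 1 ≤ a) (E' : List ℕ) (x : ℝ) :
    Fn (a :: E') x = ∫ y in (0:ℝ)..x, rad a y * Fn E' y := by
  have hw : ∀ y : ℝ, (starRingEnd ℂ) (wal 2 (2 ^ (a-1)) y) = rad a y := fun y => by
    rw [wal_pow a ha y, rad_conj]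
  show (∫ y in (0:ℝ)..x, (starRingEnd ℂ) (wal 2 (2^(a-1)) y) * WAux 2 (E'.map fun a => 2^(a-1)) y) = _
  simp only [hw]; rfl

lemma good (E : List ℕ) (hpos : ∀ a ∈ E, 1 ≤ a) (hpw : E.Pairwise (· < ·)) :
    Continuous (Fn E) ∧
    (∀ x : ℝ, ∃ r : ℝ, 0 ≤ r ∧ Fn E x = (r:ℂ)) ∧
    (∀ a E', E = a :: E' →
      (∀ (m : ℤ) (x₁ x₂ : ℝ), x₁ + x₂ = (m:ℝ) * (2:ℝ)^(-(a:ℤ)+1) → Fn E x₁ = Fn E x₂) ∧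
      (∀ (m : ℤ) (x₁ x₂ : ℝ), x₁ + x₂ = (2*(m:ℝ)+1) * (2:ℝ)^(-(a:ℤ)) →
        Fn E x₁ + Fn E x₂ = Fn E ((2:ℝ)^(-(a:ℤ))))) := by
  induction E with
  | nil =>
    refine ⟨continuous_const, fun x => ⟨1, by norm_num, rfl⟩, fun a E' h => by simp at h⟩
  | cons a E' ih =>
    have ha : 1 ≤ a := hpos a List.mem_cons_self
    have hlt : ∀ b ∈ E', a < b := fun b hb => List.rel_of_pairwise_cons hpw hb
    obtain ⟨hGcont, hGreal, hGtail⟩ :=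
      ih (fun b hb => hpos b (List.mem_cons_of_mem a hb)) (List.Pairwise.of_cons hpw)
    set G := Fn E' with hG
    -- symmetry of G at scale 2^{-a}
    have hGsym : ∀ (m : ℤ) (u : ℝ), G ((m:ℝ) * (2:ℝ)^(-(a:ℤ)) - u) = G u := by
      cases E' with
      | nil => intro m u; rfl
      | cons a' E'' =>
        intro m u
        have ha' : a < a' := hlt a' List.mem_cons_self
        obtain ⟨hsym', _⟩ := hGtail a' E'' rfl
        apply hsym' (m * 2^(a' - 1 - a))
        have hcast : (((a' - 1 - a : ℕ)):ℤ) = (a':ℤ) - 1 - a := by omega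
        have h2 : ((m * 2^(a'-1-a) : ℤ):ℝ) * (2:ℝ)^(-(a':ℤ)+1) = (m:ℝ) * (2:ℝ)^(-(a:ℤ)) := by
          push_cast
          rw [mul_assoc, ← zpow_natCast (2:ℝ) (a'-1-a), ← zpow_add₀ (two_ne_zero), hcast]
          ring_nf
        rw [h2]; ring
    have hGconj : ∀ y, (starRingEnd ℂ) (G y) = G y := fun y => by
      obtain ⟨r, _, hr⟩ := hGreal y; rw [hr]; simp
    set f : ℝ → ℂ := fun y => rad a y * G y with hf
    have hInt : ∀ s t : ℝ, IntervalIntegrable f volume s t := by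
      intro s t
      rw [intervalIntegrable_iff]
      exact MeasureTheory.Integrable.bdd_mul
        (intervalIntegrable_iff.mp (hGcont.intervalIntegrable s t))
        ((rad_measurable a).aestronglyMeasurable).restrict
        (Filter.Eventually.of_forall fun y => rad_norm a y)
    have hF : ∀ x : ℝ, Fn (a :: E') x = ∫ y in (0:ℝ)..x, f y := Fn_cons a ha E'
    have hFcont : Continuous (Fn (a :: E')) := by
      have h := intervalIntegral.continuous_primitive hInt 0
      have : Fn (a :: E') = fun x => ∫ y in (0:ℝ)..x, f y := funext hF
      rw [this]; exact h
    have hsub : ∀ x₁ x₂ : ℝ, Fn (a::E') x₂ - Fn (a::E') x₁ = ∫ y in x₁..x₂, f y := by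
      intro x₁ x₂
      have h := intervalIntegral.integral_add_adjacent_intervals (hInt 0 x₁) (hInt x₁ x₂)
      rw [hF, hF, ← h]; ring
    -- symmetry
    have hsym : ∀ (m : ℤ) (x₁ x₂ : ℝ), x₁ + x₂ = (m:ℝ) * (2:ℝ)^(-(a:ℤ)+1) →
        Fn (a::E') x₁ = Fn (a::E') x₂ := by
      intro m x₁ x₂ hx
      set c := (m:ℝ) * (2:ℝ)^(-(a:ℤ)+1) with hc
      have hc2 : c = ((2*m : ℤ):ℝ) * (2:ℝ)^(-(a:ℤ)) := by
        push_cast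
        rw [hc, zpow_add₀ (two_ne_zero)]; ring
      have key : ∫ y in x₁..x₂, f y = 0 := by
        have e1 : ∫ y in x₁..x₂, f (c - y) = ∫ y in (c-x₂)..(c-x₁), f y :=
          intervalIntegral.integral_comp_sub_left f c
        have e2 : c - x₂ = x₁ := by rw [← hx]; ring
        have e3 : c - x₁ = x₂ := by rw [← hx]; ring
        have e4 : ∫ y in x₁..x₂, f (c - y) = ∫ y in x₁..x₂, (-(f y)) := by
          apply intervalIntegral.integral_congr_ae
          filter_upwards [ae_notint a] with y hy _
          rw [hf]
          show rad a (c - y) * G (c - y) = -(rad a y * G y)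
          rw [hc, rad_reflect_even a m hy]
          have hGy : G ((m:ℝ) * (2:ℝ)^(-(a:ℤ)+1) - y) = G y := by
            have h := hGsym (2*m) y
            rw [show ((2*m:ℤ):ℝ) * (2:ℝ)^(-(a:ℤ)) = (m:ℝ) * (2:ℝ)^(-(a:ℤ)+1) by
              push_cast; rw [zpow_add₀ (two_ne_zero)]; ring] at h
            exact h
          rw [hGy]; ring
        rw [e2, e3] at e1
        rw [e4, intervalIntegral.integral_neg] at e1
        have : (2:ℂ) • (∫ y in x₁..x₂, f y) = 0 := by
          rw [smul_eq_mul]; linear_combination -e1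
        simpa using this
      have := hsub x₁ x₂
      rw [key] at this
      linear_combination -this
    -- anti-symmetry
    have hanti : ∀ (m : ℤ) (x₁ x₂ : ℝ), x₁ + x₂ = (2*(m:ℝ)+1) * (2:ℝ)^(-(a:ℤ)) →
        Fn (a::E') x₁ + Fn (a::E') x₂ = Fn (a::E') ((2:ℝ)^(-(a:ℤ))) := by
      intro m x₁ x₂ hx
      set c := (2*(m:ℝ)+1) * (2:ℝ)^(-(a:ℤ)) with hc
      have e1 : ∫ y in x₁..c, f (c - y) = ∫ y in (c-c)..(c-x₁), f y :=
        intervalIntegral.integral_comp_sub_left f c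
      have e3 : c - x₁ = x₂ := by rw [← hx]; ring
      have e4 : ∫ y in x₁..c, f (c - y) = ∫ y in x₁..c, f y := by
        apply intervalIntegral.integral_congr_ae
        filter_upwards [ae_notint a] with y hy _
        rw [hf]
        show rad a (c - y) * G (c - y) = rad a y * G y
        rw [hc, rad_reflect_odd a m hy]
        have hGy : G ((2*(m:ℝ)+1) * (2:ℝ)^(-(a:ℤ)) - y) = G y := by
          have h := hGsym (2*m+1) y
          push_cast at h
          exact h
        rw [hGy]
      rw [e3, sub_self] at e1
      -- so ∫_0^{x₂} f = ∫_{x₁}^c f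
      have e5 : ∫ y in (0:ℝ)..x₂, f y = ∫ y in x₁..c, f y := by rw [← e1, e4]
      have e6 : Fn (a::E') x₁ + Fn (a::E') x₂ = Fn (a::E') c := by
        rw [hF, hF, hF, e5, intervalIntegral.integral_add_adjacent_intervals (hInt 0 x₁) (hInt x₁ c)]
      have e7 : Fn (a::E') c = Fn (a::E') ((2:ℝ)^(-(a:ℤ))) := by
        apply hsym (m+1)
        rw [hc, zpow_add₀ (two_ne_zero)]
        push_cast; ring
      rw [e6, e7]
    -- realness
    have hreal : ∀ x : ℝ, (starRingEnd ℂ) (Fn (a::E') x) = Fn (a::E') x := by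
      intro x
      rw [hF, conj_intervalIntegral]
      apply intervalIntegral.integral_congr
      intro y _
      show (starRingEnd ℂ) (rad a y * G y) = rad a y * G y
      rw [map_mul, rad_conj, hGconj]
    -- nonnegativity on [0, 2^{-a}]
    have hnneg0 : ∀ x : ℝ, 0 ≤ x → x ≤ (2:ℝ)^(-(a:ℤ)) → 0 ≤ (Fn (a::E') x).re := by
      intro x h0 h1
      rw [hF]
      have hre : (∫ y in (0:ℝ)..x, f y).re = ∫ y in (0:ℝ)..x, (f y).re := by
        rw [show (∫ y in (0:ℝ)..x, f y).re = Complex.reCLM (∫ y in (0:ℝ)..x, f y) from rfl,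
          ← ContinuousLinearMap.intervalIntegral_comp_comm Complex.reCLM (hInt 0 x)]
        rfl
      rw [hre]
      apply intervalIntegral.integral_nonneg_of_ae_restrict h0
      have hne : ∀ᵐ y : ℝ, y ≠ (2:ℝ)^(-(a:ℤ)) := by
        have : volume {(2:ℝ)^(-(a:ℤ))} = 0 := measure_singleton _
        exact MeasureTheory.measure_eq_zero_iff_ae_notMem.mp this
      filter_upwards [MeasureTheory.ae_restrict_mem measurableSet_Icc,
        MeasureTheory.ae_restrict_of_ae hne] with y hy hne'
      have hylt : y < (2:ℝ)^(-(a:ℤ)) := lt_of_le_of_ne (le_trans hy.2 h1) hne'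
      show 0 ≤ (rad a y * G y).re
      rw [rad_one a hy.1 hylt, one_mul]
      obtain ⟨r, hr0, hr⟩ := hGreal y
      rw [hr]; simpa using hr0
    -- nonnegativity everywhere
    have hnneg : ∀ x : ℝ, 0 ≤ (Fn (a::E') x).re := by
      intro x
      set h0 := (2:ℝ)^(-(a:ℤ)) with hh0
      set p := (2:ℝ)^(-(a:ℤ)+1) with hp0
      have hp2 : p = 2 * h0 := by rw [hp0, hh0, zpow_add₀ (two_ne_zero)]; ring
      have hppos : 0 < p := by rw [hp0]; positivity
      have hh0pos : 0 < h0 := by rw [hh0]; positivity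
      set n := ⌊x / p⌋ with hn
      set u := x - n * p with hu
      have hu0 : 0 ≤ u := by
        have := Int.floor_le (x / p)
        rw [hu]
        have : (n:ℝ) * p ≤ x := by
          rw [hn]
          calc (⌊x/p⌋:ℝ) * p ≤ (x/p) * p := by
                apply mul_le_mul_of_nonneg_right (Int.floor_le _) (le_of_lt hppos)
            _ = x := by field_simp
        linarith
      have hup : u < p := by
        have h2 : x / p < n + 1 := by rw [hn]; exact Int.lt_floor_add_one _
        have : x < (n + 1) * p := by
          calc x = (x/p) * p := by field_simp
            _ < ((n:ℝ)+1) * p := by apply mul_lt_mul_of_pos_right h2 hppos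
        rw [hu]; linarith
      have e2 : Fn (a::E') u = Fn (a::E') (p - u) := hsym 1 u (p - u) (by push_cast; ring)
      have hxu : Fn (a::E') x = Fn (a::E') u := by
        have e1 : Fn (a::E') x = Fn (a::E') (((n+1 : ℤ):ℝ) * p - x) := by
          apply hsym (n+1)
          push_cast; ring
        have e3 : ((n+1 : ℤ):ℝ) * p - x = p - u := by rw [hu]; push_cast; ring
        rw [e1, e3, ← e2]
      by_cases hcase : u ≤ h0
      · rw [hxu]; exact hnneg0 u hu0 hcase
      · rw [hxu, e2]
        exact hnneg0 (p - u) (by linarith) (by linarith)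
    refine ⟨hFcont, ?_, ?_⟩
    · intro x
      refine ⟨(Fn (a::E') x).re, hnneg x, (Complex.conj_eq_iff_re.mp (hreal x)).symm⟩
    · intro a0 E0 he
      injection he with h1 h2
      subst h1; subst h2
      exact ⟨hsym, hanti⟩


def Ek (k : ℕ) : List ℕ :=
  ((Nat.digits 2 k).zipIdx.map Prod.swap |>.filter fun p => p.2 ≠ 0).map fun p => p.1 + 1

lemma terms_eq (k : ℕ) : terms 2 k = (Ek k).map (fun a => 2 ^ (a - 1)) := by
  unfold terms Ek
  rw [List.map_map]
  apply List.map_congr_left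
  intro p hp
  have hmem := List.mem_of_mem_filter hp
  have h2 : p.2 ∈ Nat.digits 2 k := by
    have h : List.map Prod.snd ((Nat.digits 2 k).zipIdx.map Prod.swap) = Nat.digits 2 k := by
      rw [List.map_map, show (Prod.snd ∘ Prod.swap : ℕ × ℕ → ℕ) = Prod.fst from rfl, List.zipIdx_map_fst]
    rw [← h]
    exact List.mem_map_of_mem (f := Prod.snd) hmem
  have hlt : p.2 < 2 := Nat.digits_lt_base (by norm_num) h2
  have hne : p.2 ≠ 0 := by
    have := (List.mem_filter.mp hp).2
    simpa using this
  have h1 : p.2 = 1 := by omega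
  simp [Function.comp, h1]

lemma Ek_pos (k : ℕ) : ∀ a ∈ Ek k, 1 ≤ a := by
  intro a ha
  obtain ⟨p, _, rfl⟩ := List.mem_map.mp ha
  omega

lemma Ek_pairwise (k : ℕ) : (Ek k).Pairwise (· < ·) := by
  unfold Ek
  rw [List.pairwise_map]
  have h1 : ((Nat.digits 2 k).zipIdx.map Prod.swap).Pairwise (fun p q => p.1 < q.1) := by
    have h := List.pairwise_lt_range (n := (Nat.digits 2 k).length)
    rw [List.range_eq_range', ← List.zipIdx_map_snd 0 (Nat.digits 2 k), List.pairwise_map] at h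
    rw [List.pairwise_map]
    exact h
  exact (List.Pairwise.sublist List.filter_sublist h1).imp (fun h => by omega)

lemma Ek_ne_nil {k : ℕ} (hk : 0 < k) : Ek k ≠ [] := by
  intro hnil
  have hd : Nat.digits 2 k ≠ [] := Nat.digits_ne_nil_iff_ne_zero.mpr (by omega)
  have hlast : (Nat.digits 2 k).getLast hd ≠ 0 := Nat.getLast_digit_ne_zero 2 (by omega)
  have hmem : (Nat.digits 2 k).getLast hd ∈ Nat.digits 2 k := List.getLast_mem hd
  have hmem2 : (Nat.digits 2 k).getLast hd ∈ List.map Prod.snd ((Nat.digits 2 k).zipIdx.map Prod.swap) := by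
    rw [List.map_map, show (Prod.snd ∘ Prod.swap : ℕ × ℕ → ℕ) = Prod.fst from rfl, List.zipIdx_map_fst]; exact hmem
  obtain ⟨p, hp, hp2⟩ := List.mem_map.mp hmem2
  have : ((Nat.digits 2 k).zipIdx.map Prod.swap |>.filter fun p => p.2 ≠ 0) = [] := by
    unfold Ek at hnil
    exact List.map_eq_nil_iff.mp hnil
  have := List.filter_eq_nil_iff.mp this p hp
  simp [hp2] at this
  exact hlast this

lemma W_eq_Fn (k : ℕ) (x : ℝ) : W 2 k x = Fn (Ek k) x := by
  unfold W Fn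
  rw [terms_eq]

lemma aLow_eq (k : ℕ) : aLow 2 k = ((Ek k).head?).getD 0 := by
  unfold aLow alist
  rw [List.getLast?_reverse]
  rfl



/-- Lemma 3.11 (properties of `W_k` in the dyadic case). -/
theorem W_dyadic_properties :
    (∀ k : ℕ, 0 < k → ∀ x₁ ∈ Set.Ico (0:ℝ) 1, ∀ x₂ ∈ Set.Ico (0:ℝ) 1,
      (∃ m : ℤ, x₁ + x₂ = (m : ℝ) * (2:ℝ) ^ (-(aLow 2 k : ℤ) + 1)) →
      W 2 k x₁ = W 2 k x₂) ∧
    (∀ k : ℕ, 0 < k → ∀ x₁ ∈ Set.Ico (0:ℝ) 1, ∀ x₂ ∈ Set.Ico (0:ℝ) 1,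
      (∃ m : ℤ, x₁ + x₂ = (m : ℝ) * (2:ℝ) ^ (-(aLow 2 k : ℤ))) →
      (¬ ∃ m : ℤ, x₁ + x₂ = (m : ℝ) * (2:ℝ) ^ (-(aLow 2 k : ℤ) + 1)) →
      W 2 k x₁ + W 2 k x₂ = W 2 k ((2:ℝ) ^ (-(aLow 2 k : ℤ)))) ∧
    (∀ k : ℕ, ∀ x ∈ Set.Ico (0:ℝ) 1, (W 2 k x).im = 0 ∧ 0 ≤ (W 2 k x).re) := by
  refine ⟨?_, ?_, ?_⟩
  · intro k hk x₁ _ x₂ _ ⟨m, hm⟩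
    obtain ⟨a, E', hE⟩ := List.exists_cons_of_ne_nil (Ek_ne_nil hk)
    have ha : aLow 2 k = a := by rw [aLow_eq, hE]; rfl
    obtain ⟨hsym, _⟩ := (good (Ek k) (Ek_pos k) (Ek_pairwise k)).2.2 a E' hE
    rw [W_eq_Fn, W_eq_Fn]
    rw [ha] at hm
    exact hsym m x₁ x₂ hm
  · intro k hk x₁ _ x₂ _ ⟨m, hm⟩ hnot
    obtain ⟨a, E', hE⟩ := List.exists_cons_of_ne_nil (Ek_ne_nil hk)
    have ha : aLow 2 k = a := by rw [aLow_eq, hE]; rfl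
    obtain ⟨hsym, hanti⟩ := (good (Ek k) (Ek_pos k) (Ek_pairwise k)).2.2 a E' hE
    rw [ha] at hm hnot
    rcases Int.even_or_odd m with ⟨m', rfl⟩ | ⟨m', rfl⟩
    · exfalso
      apply hnot
      refine ⟨m', ?_⟩
      rw [hm, zpow_add₀ (two_ne_zero)]
      push_cast; ring
    · rw [W_eq_Fn, W_eq_Fn, W_eq_Fn, ha]
      apply hanti m'
      rw [hm]; push_cast; ring
  · intro k x _
    obtain ⟨r, hr0, hr⟩ := (good (Ek k) (Ek_pos k) (Ek_pairwise k)).2.1 x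
    rw [W_eq_Fn, hr]
    simp [hr0]


end WalshPaper
end
end
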